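/- arXiv:2506.10671 — 3 statements merged into one kernel-verified Lean document; each statement's English description precedes it below -/
import Mathlib

section
/- Let x ∈ P_ASEP(n) contain a λ-loop between v₁ and v₂, and let x' = x ↑^{v₃} (v₁,v₂) be the point in ℝ^{(n+1)n} obtained by the λ-loop breaking procedure, inserting a new node v₃ with x'_{v₁v₃} = x'_{v₃v₂} = λ, x'_{v₃v₁} = x'_{v₂v₃} = 1−λ, x'_{v₁v₂} = x'_{v₂v₁} = 0, all other arcs incident to v₃ zero, and x'_{uv} = x_{uv} otherwise. Then x' ∈ P_ASEP(n+1). -/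
open Finset

/-- The Asymmetric Subtour Elimination Polytope on `n` nodes. -/
def PASEP (n : ℕ) (x : Fin n → Fin n → ℝ) : Prop :=
  (∀ i j, 0 ≤ x i j) ∧ (∀ i, x i i = 0) ∧
  (∀ j, ∑ i, x i j = 1) ∧ (∀ i, ∑ j, x i j = 1) ∧
  ∀ S : Finset (Fin n), 2 ≤ S.card → S.card ≤ n - 2 →
    1 ≤ ∑ i ∈ S, ∑ j ∈ Sᶜ, x i j

/-- The `λ`-loop breaking procedure `x ↑^{v₃} (v₁, v₂)`: a new node `v₃`
(the last element of `Fin (n+1)`; old nodes are embedded via `Fin.castSucc`)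
is inserted into the `λ`-loop between `v₁` and `v₂`, with
`x'_{v₁v₃} = x'_{v₃v₂} = λ`, `x'_{v₃v₁} = x'_{v₂v₃} = 1 − λ`,
`x'_{v₁v₂} = x'_{v₂v₁} = 0`, all other arcs incident to `v₃` zero, and all other
entries unchanged. -/
def breakLoop (n : ℕ) (x : Fin n → Fin n → ℝ) (v₁ v₂ : Fin n) (lam : ℝ) :
    Fin (n + 1) → Fin (n + 1) → ℝ := fun u v =>
  if hu : u = Fin.last n then
    (if hv : v = Fin.last n then 0
     else if v.castPred hv = v₂ then lam
     else if v.castPred hv = v₁ then 1 - lam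
     else 0)
  else if hv : v = Fin.last n then
    (if u.castPred hu = v₁ then lam
     else if u.castPred hu = v₂ then 1 - lam
     else 0)
  else if u.castPred hu = v₁ ∧ v.castPred hv = v₂ then 0
  else if u.castPred hu = v₂ ∧ v.castPred hv = v₁ then 0
  else x (u.castPred hu) (v.castPred hv)

/-!
On old arcs `x'` agrees with `x` except that the two loop arcs are removed; their weight is
rerouted along the paths `v₁ v₃ v₂` and `v₂ v₃ v₁`, so all in- and out-degrees stay `1`. A path
crosses every cut that its chord crosses, hence for `S ⊆ V ∪ {v₃}` with trace `S₀` on the old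
nodes, `x'(δ⁺(S)) ≥ x(δ⁺(S₀))`. When `2 ≤ |S| ≤ n - 1`, `S₀` is nonempty and proper, and for
such sets `x(δ⁺(S₀)) ≥ 1`: the subtour constraints cover `2 ≤ |S₀| ≤ n - 2`, the degree
equations cover the singletons and their complements.
-/

namespace Fin

theorem sum_finset_eq_sum_preimage_castSucc {M : Type*} [AddCommMonoid M] {m : ℕ}
    (S : Finset (Fin (m + 1))) (g : Fin (m + 1) → M) :
    ∑ i ∈ S, g i = ∑ i ∈ S.preimage castSucc (castSucc_injective m).injOn, g i.castSucc +
      if last m ∈ S then g (last m) else 0 := by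
  classical
  rw [← sum_filter_add_sum_filter_not S (· = last m), filter_eq', add_comm, sum_preimage']
  congr 1
  · refine sum_congr (filter_congr fun i _ => ?_) fun _ _ => rfl
    exact ⟨fun h => ⟨i.castPred h, castSucc_castPred i h⟩,
      by rintro ⟨j, rfl⟩; exact castSucc_ne_last j⟩
  · split_ifs <;> simp

theorem sum_cut_eq_sum_preimage_castSucc {M : Type*} [AddCommMonoid M] {m : ℕ}
    (S : Finset (Fin (m + 1))) (f : Fin (m + 1) → Fin (m + 1) → M) :
    ∑ i ∈ S, ∑ j ∈ Sᶜ, f i j =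
      ∑ i ∈ S.preimage castSucc (castSucc_injective m).injOn,
          ∑ j ∈ (S.preimage castSucc (castSucc_injective m).injOn)ᶜ, f i.castSucc j.castSucc +
        if last m ∈ S then
          ∑ j ∈ (S.preimage castSucc (castSucc_injective m).injOn)ᶜ, f (last m) j.castSucc
        else ∑ i ∈ S.preimage castSucc (castSucc_injective m).injOn, f i.castSucc (last m) := by
  simp only [sum_finset_eq_sum_preimage_castSucc Sᶜ, preimage_compl _ (castSucc_injective m),
    mem_compl]
  rw [sum_finset_eq_sum_preimage_castSucc S]
  split_ifs <;> simp [sum_add_distrib]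

theorem card_le_card_preimage_castSucc_add_one {m : ℕ} (S : Finset (Fin (m + 1))) :
    S.card ≤ (S.preimage castSucc (castSucc_injective m).injOn).card + 1 := by
  have hS : S ⊆ insert (last m)
      ((S.preimage castSucc (castSucc_injective m).injOn).image castSucc) := by
    intro u hu
    induction u using lastCases with
    | last => exact mem_insert_self _ _
    | cast i => exact mem_insert_of_mem (mem_image_of_mem _ (mem_preimage.2 hu))
  exact (card_le_card hS).trans ((card_insert_le _ _).trans (Nat.succ_le_succ card_image_le))

end Fin

theorem PASEP.one_le_sum_cut {n : ℕ} {x : Fin n → Fin n → ℝ} (hx : PASEP n x)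
    {S : Finset (Fin n)} (hS : S.Nonempty) (hSu : S ≠ univ) :
    1 ≤ ∑ i ∈ S, ∑ j ∈ Sᶜ, x i j := by
  obtain ⟨-, hdiag, hcol, hrow, hsub⟩ := hx
  have hcard := card_compl S
  have hpos := card_pos.2 hS
  have hlt := card_lt_card (ssubset_univ_iff.2 hSu)
  simp only [card_univ, Fintype.card_fin] at hcard hlt
  by_cases hS1 : S.card = 1
  · obtain ⟨w, rfl⟩ := card_eq_one.1 hS1
    rw [sum_singleton, ← hrow w, Fintype.sum_eq_add_sum_compl w, hdiag w, zero_add]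
  by_cases hSc1 : Sᶜ.card = 1
  · obtain ⟨w, hw⟩ := card_eq_one.1 hSc1
    rw [← compl_compl S, hw, compl_compl]
    simp only [sum_singleton]
    rw [← hcol w, Fintype.sum_eq_add_sum_compl w, hdiag w, zero_add]
  exact hsub S (by omega) (by omega)

section BreakLoop

variable {n : ℕ} {x : Fin n → Fin n → ℝ} {v₁ v₂ : Fin n} {lam : ℝ}

theorem breakLoop_castSucc_castSucc (hne : v₁ ≠ v₂) (ha : x v₁ v₂ = lam)
    (hb : x v₂ v₁ = 1 - lam) (i j : Fin n) :
    breakLoop n x v₁ v₂ lam i.castSucc j.castSucc =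
      x i j - (if i = v₁ ∧ j = v₂ then lam else 0) -
        (if i = v₂ ∧ j = v₁ then 1 - lam else 0) := by
  simp only [breakLoop, Fin.castSucc_ne_last, dite_false, Fin.castPred_castSucc]
  split_ifs <;> grind

theorem breakLoop_castSucc_last (hne : v₁ ≠ v₂) (i : Fin n) :
    breakLoop n x v₁ v₂ lam i.castSucc (Fin.last n) =
      (if i = v₁ then lam else 0) + (if i = v₂ then 1 - lam else 0) := by
  simp only [breakLoop, Fin.castSucc_ne_last, dite_false, dite_true, Fin.castPred_castSucc]
  split_ifs <;> grind

theorem breakLoop_last_castSucc (hne : v₁ ≠ v₂) (j : Fin n) :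
    breakLoop n x v₁ v₂ lam (Fin.last n) j.castSucc =
      (if j = v₂ then lam else 0) + (if j = v₁ then 1 - lam else 0) := by
  simp only [breakLoop, Fin.castSucc_ne_last, dite_false, dite_true, Fin.castPred_castSucc]
  split_ifs <;> grind

theorem breakLoop_last_last : breakLoop n x v₁ v₂ lam (Fin.last n) (Fin.last n) = 0 := by
  simp [breakLoop]

theorem breakLoop_nonneg (hx : ∀ i j, 0 ≤ x i j) (h0 : 0 ≤ lam) (h1 : lam ≤ 1)
    (u v : Fin (n + 1)) : 0 ≤ breakLoop n x v₁ v₂ lam u v := by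
  unfold breakLoop
  split_ifs <;> first | exact hx _ _ | linarith

theorem breakLoop_self (hx : ∀ i, x i i = 0) (u : Fin (n + 1)) :
    breakLoop n x v₁ v₂ lam u u = 0 := by
  unfold breakLoop
  split_ifs <;> simp_all

theorem breakLoop_sum_row (hne : v₁ ≠ v₂) (ha : x v₁ v₂ = lam) (hb : x v₂ v₁ = 1 - lam)
    (hrow : ∀ i, ∑ j, x i j = 1) (u : Fin (n + 1)) :
    ∑ v, breakLoop n x v₁ v₂ lam u v = 1 := by
  induction u using Fin.lastCases with
  | last =>
    simp [Fin.sum_univ_castSucc, breakLoop_last_castSucc hne, breakLoop_last_last,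
      sum_add_distrib]
  | cast i =>
    simp [Fin.sum_univ_castSucc, breakLoop_castSucc_castSucc hne ha hb,
      breakLoop_castSucc_last hne, sum_sub_distrib, hrow, ite_and]

theorem breakLoop_sum_col (hne : v₁ ≠ v₂) (ha : x v₁ v₂ = lam) (hb : x v₂ v₁ = 1 - lam)
    (hcol : ∀ j, ∑ i, x i j = 1) (v : Fin (n + 1)) :
    ∑ u, breakLoop n x v₁ v₂ lam u v = 1 := by
  induction v using Fin.lastCases with
  | last =>
    simp [Fin.sum_univ_castSucc, breakLoop_castSucc_last hne, breakLoop_last_last,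
      sum_add_distrib]
  | cast j =>
    simp [Fin.sum_univ_castSucc, breakLoop_castSucc_castSucc hne ha hb,
      breakLoop_last_castSucc hne, sum_sub_distrib, hcol, ite_and]

theorem breakLoop_sum_cut_ge (hne : v₁ ≠ v₂) (ha : x v₁ v₂ = lam) (hb : x v₂ v₁ = 1 - lam)
    (S : Finset (Fin (n + 1))) :
    ∑ i ∈ S.preimage Fin.castSucc (Fin.castSucc_injective n).injOn,
        ∑ j ∈ (S.preimage Fin.castSucc (Fin.castSucc_injective n).injOn)ᶜ, x i j ≤
      ∑ i ∈ S, ∑ j ∈ Sᶜ, breakLoop n x v₁ v₂ lam i j := by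
  rw [Fin.sum_cut_eq_sum_preimage_castSucc]
  simp only [breakLoop_castSucc_castSucc hne ha hb, breakLoop_castSucc_last hne,
    breakLoop_last_castSucc hne, sum_add_distrib, sum_sub_distrib, ite_and, sum_ite_irrel,
    sum_ite_eq', sum_const_zero, mem_compl, mem_preimage, ite_not]
  split_ifs <;> linarith

end BreakLoop

/-- If `x ∈ P_ASEP(n)` contains a `λ`-loop between `v₁` and `v₂`, then the point
`x' = x ↑^{v₃} (v₁,v₂)` obtained by the `λ`-loop breaking procedure belongs to
`P_ASEP(n+1)`. -/
theorem breakLoop_mem (n : ℕ) (x : Fin n → Fin n → ℝ) (hx : PASEP n x)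
    (v₁ v₂ : Fin n) (hne : v₁ ≠ v₂) (lam : ℝ) (h0 : 0 < lam) (h1 : lam < 1)
    (ha : x v₁ v₂ = lam) (hb : x v₂ v₁ = 1 - lam) :
    PASEP (n + 1) (breakLoop n x v₁ v₂ lam) := by
  have ⟨hnn, hdiag, hcol, hrow, _⟩ := hx
  refine ⟨breakLoop_nonneg hnn h0.le h1.le, breakLoop_self hdiag,
    breakLoop_sum_col hne ha hb hcol, breakLoop_sum_row hne ha hb hrow, fun S hS2 hSn => ?_⟩
  set S₀ := S.preimage Fin.castSucc (Fin.castSucc_injective n).injOn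
  have hle : S₀.card ≤ S.card :=
    card_le_card_of_injOn _ (fun i hi => mem_preimage.1 hi) (Fin.castSucc_injective n).injOn
  have hge : S.card ≤ S₀.card + 1 := Fin.card_le_card_preimage_castSucc_add_one S
  have hS₀ : S₀.Nonempty := card_pos.1 (by omega)
  have hS₀u : S₀ ≠ univ := fun h => by
    rw [h, card_univ, Fintype.card_fin] at hle
    omega
  exact (hx.one_le_sum_cut hS₀ hS₀u).trans (breakLoop_sum_cut_ge hne ha hb S)
end

section
/- Let S ⊂ V be a tight set for x ∈ P_ASEP(n), i.e., x(δ(S)) = 1. Then the collapsed point x↓_w(S), defined on the node set (V ∖ S) ∪ {w} by (x↓_w(S))_{uw} = ∑_{s∈S} x_{us}, (x↓_w(S))_{wv} = ∑_{s∈S} x_{sv}, and (x↓_w(S))_{uv} = x_{uv} for u,v ∉ S, belongs to P_ASEP(n − |S| + 1). -/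
/-!
Let `c` send the nodes of `S` to the new node `w` and fix the others. Off the diagonal the
collapsed point is the pushforward of `x` along `c`, so the flow leaving a node set `T` of the
collapsed digraph is the flow `x(δ(c⁻¹ T))`. The out-degree of `w` is therefore `x(δ(S)) = 1`, its
in-degree is `x(δ(V ∖ S))`, which equals `x(δ(S))` under the degree constraints, and the degrees
of the other nodes are those of their unique preimage. A set `T` with `2 ≤ |T| ≤ n - |S| - 1` has
a preimage with between `2` and `n - 2` nodes, so its subtour constraint is that of `c⁻¹ T`.
-/

open Finset

/-- Collapsing the set `S` into a single node `w`. The new node set is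
`(V ∖ S) ∪ {w}`, realized as `Fin (n - |S| + 1)`: the nodes outside `S` are
identified with `Fin (n - |S|)` via a bijection `e`, and `w` is the last
element. Arcs into `w` collect `∑_{s∈S} x_{us}`, arcs out of `w` collect
`∑_{s∈S} x_{sv}`, and all other entries are unchanged. -/
def collapse (n : ℕ) (x : Fin n → Fin n → ℝ) (S : Finset (Fin n))
    (e : {i : Fin n // i ∉ S} ≃ Fin (n - S.card)) :
    Fin (n - S.card + 1) → Fin (n - S.card + 1) → ℝ := fun u v =>
  if hu : u = Fin.last (n - S.card) then
    (if hv : v = Fin.last (n - S.card) then 0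
     else ∑ s ∈ S, x s ↑(e.symm (v.castPred hv)))
  else if hv : v = Fin.last (n - S.card) then
    ∑ s ∈ S, x ↑(e.symm (u.castPred hu)) s
  else x ↑(e.symm (u.castPred hu)) ↑(e.symm (v.castPred hv))

section Flow

variable {α β : Type*} [Fintype α] [DecidableEq α] [Fintype β] [DecidableEq β]

/-- `x(δ(S))`. -/
def outflow (x : α → α → ℝ) (S : Finset α) : ℝ := ∑ i ∈ S, ∑ j ∈ Sᶜ, x i j

/-- The arc weights of the digraph obtained by contracting each fiber of `f` to a node. -/
def pushforward (f : α → β) (x : α → α → ℝ) (u v : β) : ℝ :=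
  ∑ a ∈ {a | f a = u}, ∑ c ∈ {c | f c = v}, x a c

lemma outflow_congr {x y : α → α → ℝ} (h : ∀ i j, i ≠ j → x i j = y i j) (S : Finset α) :
    outflow x S = outflow y S :=
  sum_congr rfl fun i hi => sum_congr rfl fun j hj =>
    h i j fun hij => mem_compl.mp hj (hij ▸ hi)

lemma filter_apply_mem_compl (f : α → β) (T : Finset β) :
    ({a | f a ∈ Tᶜ} : Finset α) = ({a | f a ∈ T} : Finset α)ᶜ := by
  ext; simp

lemma outflow_pushforward (f : α → β) (x : α → α → ℝ) (T : Finset β) :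
    outflow (pushforward f x) T = outflow x {a | f a ∈ T} := by
  calc outflow (pushforward f x) T
      = ∑ u ∈ T, ∑ a ∈ {a | f a = u}, ∑ v ∈ Tᶜ, ∑ c ∈ {c | f c = v}, x a c :=
        sum_congr rfl fun _ _ => sum_comm
    _ = ∑ a ∈ {a | f a ∈ T}, ∑ c ∈ {c | f c ∈ Tᶜ}, x a c := by
        rw [sum_fiberwise_eq_sum_filter]
        exact sum_congr rfl fun a _ => sum_fiberwise_eq_sum_filter _ _ _ _
    _ = outflow x {a | f a ∈ T} := by rw [filter_apply_mem_compl]; rfl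

lemma outflow_transpose (x : α → α → ℝ) (S : Finset α) :
    outflow (fun i j => x j i) S = outflow x Sᶜ := by
  rw [outflow, outflow, compl_compl, sum_comm]

lemma sum_row_eq_outflow_singleton_add (x : α → α → ℝ) (a : α) :
    ∑ j, x a j = outflow x {a} + x a a := by
  rw [outflow, sum_singleton, add_comm, ← sum_singleton (x a) a, sum_add_sum_compl]

lemma sum_col_eq_outflow_compl_singleton_add (x : α → α → ℝ) (a : α) :
    ∑ i, x i a = outflow x {a}ᶜ + x a a := by
  rw [← outflow_transpose]
  exact sum_row_eq_outflow_singleton_add (fun i j => x j i) a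

lemma outflow_add_internal_eq_card (x : α → α → ℝ) (hrow : ∀ i, ∑ j, x i j = 1) (S : Finset α) :
    outflow x S + ∑ i ∈ S, ∑ j ∈ S, x i j = S.card := by
  simp [outflow, ← sum_add_distrib, add_comm, sum_add_sum_compl, hrow]

lemma outflow_compl (x : α → α → ℝ) (hrow : ∀ i, ∑ j, x i j = 1) (hcol : ∀ j, ∑ i, x i j = 1)
    (S : Finset α) : outflow x Sᶜ = outflow x S := by
  have hout := outflow_add_internal_eq_card x hrow S
  have hin := outflow_add_internal_eq_card (fun i j => x j i) hcol S
  rw [outflow_transpose, sum_comm] at hin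
  linarith

end Flow

section Collapse

variable {n : ℕ} {S : Finset (Fin n)} (e : {i : Fin n // i ∉ S} ≃ Fin (n - S.card))

def collapseMap (a : Fin n) : Fin (n - S.card + 1) :=
  if h : a ∈ S then Fin.last _ else (e ⟨a, h⟩).castSucc

lemma collapseMap_fiber_last : ({a | collapseMap e a = Fin.last _} : Finset (Fin n)) = S := by
  ext a
  simp only [mem_filter, mem_univ, true_and]
  by_cases ha : a ∈ S <;> simp [collapseMap, ha, (Fin.castSucc_lt_last _).ne]

lemma collapseMap_fiber_castSucc (k : Fin (n - S.card)) :
    ({a | collapseMap e a = k.castSucc} : Finset (Fin n)) = {↑(e.symm k)} := by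
  ext a
  simp only [mem_filter, mem_univ, true_and, mem_singleton]
  by_cases ha : a ∈ S
  · simp only [collapseMap, dif_pos ha, (Fin.castSucc_lt_last k).ne', false_iff]
    exact fun h => (e.symm k).2 (h ▸ ha)
  · simp only [collapseMap, dif_neg ha, Fin.castSucc_inj]
    rw [← Equiv.eq_symm_apply, Subtype.ext_iff]

lemma collapse_eq_pushforward (x : Fin n → Fin n → ℝ) {u v : Fin (n - S.card + 1)} (huv : u ≠ v) :
    collapse n x S e u v = pushforward (collapseMap e) x u v := by
  induction u using Fin.lastCases <;> induction v using Fin.lastCases <;>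
    simp_all [collapse, pushforward, collapseMap_fiber_last, collapseMap_fiber_castSucc]

lemma collapse_self {x : Fin n → Fin n → ℝ} (hdiag : ∀ i, x i i = 0) (u : Fin (n - S.card + 1)) :
    collapse n x S e u u = 0 := by
  unfold collapse
  split_ifs
  · rfl
  · exact hdiag _

lemma collapse_apply_nonneg {x : Fin n → Fin n → ℝ} (hx : ∀ i j, 0 ≤ x i j)
    (u v : Fin (n - S.card + 1)) :
    0 ≤ collapse n x S e u v := by
  unfold collapse
  split_ifs
  · exact le_rfl
  all_goals first | exact hx _ _ | exact sum_nonneg fun _ _ => hx _ _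

lemma outflow_collapse (x : Fin n → Fin n → ℝ) (T : Finset (Fin (n - S.card + 1))) :
    outflow (collapse n x S e) T = outflow x {a | collapseMap e a ∈ T} := by
  rw [outflow_congr (fun _ _ => collapse_eq_pushforward e x), outflow_pushforward]

/-- Each fiber of the collapse is either the tight set `S` or a single node. -/
lemma outflow_collapseMap_fiber {x : Fin n → Fin n → ℝ} (hdiag : ∀ i, x i i = 0)
    (hrow : ∀ i, ∑ j, x i j = 1) (htight : outflow x S = 1) (u : Fin (n - S.card + 1)) :
    outflow x {a | collapseMap e a ∈ ({u} : Finset _)} = 1 := by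
  simp only [mem_singleton]
  induction u using Fin.lastCases with
  | last => rw [collapseMap_fiber_last, htight]
  | cast k =>
    rw [collapseMap_fiber_castSucc]
    linarith [sum_row_eq_outflow_singleton_add x (e.symm k), hrow (e.symm k), hdiag (e.symm k)]

lemma card_preimage_collapseMap_of_last_notMem {T : Finset (Fin (n - S.card + 1))}
    (hT : Fin.last _ ∉ T) :
    #{a | collapseMap e a ∈ T} = #T := by
  rw [card_eq_sum_card_fiberwise (s := {a | collapseMap e a ∈ T}) (t := T)
    fun a ha => (mem_filter.mp ha).2, card_eq_sum_ones T]
  refine sum_congr rfl fun u hu => ?_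
  obtain ⟨k, rfl⟩ := Fin.exists_castSucc_eq.mpr (ne_of_mem_of_not_mem hu hT)
  have hfiber : ({a ∈ {a | collapseMap e a ∈ T} | collapseMap e a = k.castSucc} : Finset (Fin n)) =
      ({a | collapseMap e a = k.castSucc} : Finset (Fin n)) := by
    ext a
    simp only [mem_filter, mem_univ, true_and, and_iff_right_iff_imp]
    exact fun h => h ▸ hu
  rw [hfiber, collapseMap_fiber_castSucc, card_singleton]

lemma card_preimage_collapseMap_bounds (hS : 0 < S.card) {T : Finset (Fin (n - S.card + 1))}
    (hT2 : 2 ≤ #T) (hT3 : #T ≤ n - S.card + 1 - 2) :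
    2 ≤ #{a | collapseMap e a ∈ T} ∧ #{a | collapseMap e a ∈ T} ≤ n - 2 := by
  have hSn : S.card ≤ n := by simpa using card_le_univ S
  by_cases hlast : Fin.last _ ∈ T
  · have hcompl := card_preimage_collapseMap_of_last_notMem e (T := Tᶜ) (by simpa using hlast)
    have hP := card_le_univ ({a | collapseMap e a ∈ T} : Finset (Fin n))
    rw [Fintype.card_fin] at hP
    rw [filter_apply_mem_compl, card_compl, card_compl, Fintype.card_fin, Fintype.card_fin]
      at hcompl
    omega
  · rw [card_preimage_collapseMap_of_last_notMem e hlast]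
    omega

end Collapse

theorem collapse_mem_general (n : ℕ) (x : Fin n → Fin n → ℝ) (hx : PASEP n x)
    (S : Finset (Fin n)) (h2 : 2 ≤ S.card)
    (htight : ∑ i ∈ S, ∑ j ∈ Sᶜ, x i j = 1)
    (e : {i : Fin n // i ∉ S} ≃ Fin (n - S.card)) :
    PASEP (n - S.card + 1) (collapse n x S e) := by
  obtain ⟨hpos, hdiag, hcol, hrow, hsub⟩ := hx
  have hfiber := outflow_collapseMap_fiber e hdiag hrow htight
  refine ⟨collapse_apply_nonneg e hpos, collapse_self e hdiag, fun v => ?_, fun u => ?_,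
    fun T hT2 hT3 => ?_⟩
  · rw [sum_col_eq_outflow_compl_singleton_add, collapse_self e hdiag, add_zero,
      outflow_collapse, filter_apply_mem_compl, outflow_compl x hrow hcol, hfiber]
  · rw [sum_row_eq_outflow_singleton_add, collapse_self e hdiag, add_zero, outflow_collapse,
      hfiber]
  · obtain ⟨hP2, hP3⟩ := card_preimage_collapseMap_bounds e (by omega) hT2 hT3
    change 1 ≤ outflow (collapse n x S e) T
    exact outflow_collapse e x T ▸ hsub _ hP2 hP3

/-- If `S` is a tight set for `x ∈ P_ASEP(n)` (i.e. `x(δ(S)) = 1`), then the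
collapsed point `x ↓_w (S)` belongs to `P_ASEP(n − |S| + 1)`. -/
theorem collapse_mem (n : ℕ) (x : Fin n → Fin n → ℝ) (hx : PASEP n x)
    (S : Finset (Fin n)) (h2 : 2 ≤ S.card) (h3 : S.card ≤ n - 2)
    (htight : ∑ i ∈ S, ∑ j ∈ Sᶜ, x i j = 1)
    (e : {i : Fin n // i ∉ S} ≃ Fin (n - S.card)) :
    PASEP (n - S.card + 1) (collapse n x S e) :=
  collapse_mem_general n x hx S h2 htight e
end

section
/- Let c̄ be obtained from an ATSP cost matrix c on n nodes by setting diagonal entries to −M, and let the 2n × 2n symmetric instance C̃ be built with blocks [c̄, U; U, c̄] (U all-infinite, interpreted as forbidden edges), then all finite costs shifted by +M. Then the optimal ATSP tour value satisfies ATSP(c) = STSP(c̃) − nM, where STSP(c̃) is the optimal symmetric TSP value of the transformed instance. -/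
open Finset

/-- The optimal value of the ATSP with cost `c`: the minimum of `∑ i, c i (σ i)`
over cyclic permutations `σ` (directed Hamiltonian cycles) of the `n` nodes. -/
noncomputable def ATSPval (n : ℕ) (c : Fin n → Fin n → ℝ) : ℝ :=
  sInf {v | ∃ σ : Equiv.Perm (Fin n), (∀ i j, σ.SameCycle i j) ∧
    v = ∑ i, c i (σ i)}

/-- In the Jonker–Volgenant transformation, an edge of the `2n`-node symmetric
instance (node set `Fin n ⊕ Fin n`, where `Sum.inr j` plays the role of `j + n`)
is allowed iff its endpoints lie in different halves; edges within a half are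
forbidden (infinite cost). -/
def jvAllowed (n : ℕ) : Fin n ⊕ Fin n → Fin n ⊕ Fin n → Prop
  | Sum.inl _, Sum.inr _ => True
  | Sum.inr _, Sum.inl _ => True
  | _, _ => False

/-- The (shifted) symmetric cost of the Jonker–Volgenant transformation: the
edge `{i, j+n}` costs `c_{ji} + M` for `i ≠ j` (coming from `c̄_{ji}` shifted by
`+M`) and the edge `{i, i+n}` costs `0` (originally `−M`, shifted by `+M`). -/
def jvCost (n : ℕ) (c : Fin n → Fin n → ℝ) (M : ℝ) :
    Fin n ⊕ Fin n → Fin n ⊕ Fin n → ℝ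
  | Sum.inl i, Sum.inr j => if i = j then 0 else c j i + M
  | Sum.inr j, Sum.inl i => if i = j then 0 else c j i + M
  | _, _ => 0

/-- The optimal value of the transformed symmetric TSP: the minimum cost of an
undirected Hamiltonian cycle on the `2n` nodes using only allowed edges. -/
noncomputable def STSPval (n : ℕ) (c : Fin n → Fin n → ℝ) (M : ℝ) : ℝ :=
  sInf {v | ∃ τ : Equiv.Perm (Fin n ⊕ Fin n), (∀ a b, τ.SameCycle a b) ∧
    (∀ a, jvAllowed n a (τ a)) ∧ v = ∑ a, jvCost n c M a (τ a)}

/-! A Hamiltonian cycle `τ` of the symmetric instance alternates between the two halves, so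
`τ (inl i) = inr (f i)` and `τ (inr j) = inl (g j)` for permutations `f`, `g`, and its cost is
`∑ j, (c̄ j (f⁻¹ j) + c̄ j (g j))` with `c̄` the shifted cost. As `τ` is one cycle of length
`2n ≥ 4`, no node is fixed by both `f` and `g`, so every `j` pays at least `M`. If `f` and `g`
have disjoint supports, `g * f⁻¹` is a directed tour costing exactly `cost τ − nM`. Otherwise
some `j` pays `2M`, so `cost τ ≥ (n + 1)M`, which exceeds `nM` plus the cost of any directed
tour, as that is at most `∑ c < M`. Conversely a directed tour `σ` yields the symmetric tour
`inl i ↦ inr i ↦ inl (σ i)` of cost `cost σ + nM`. -/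

open Equiv Equiv.Perm Sum

namespace Equiv.Perm

variable {α β : Type*}

theorem SameCycle.map_of_forall_sameCycle_apply {τ : Perm α} {π : Perm β} (p : α → β)
    (h : ∀ a, π.SameCycle (p a) (p (τ a))) {a b : α} (hab : τ.SameCycle a b) :
    π.SameCycle (p a) (p b) := by
  obtain ⟨k, rfl⟩ := hab
  induction k using Int.induction_on with
  | zero => exact SameCycle.refl _ _
  | succ k ih =>
    rw [add_comm, zpow_add, zpow_one, mul_apply]
    exact ih.trans (h _)
  | pred k ih =>
    have hτ : τ ((τ ^ (-k - 1 : ℤ)) a) = (τ ^ (-k : ℤ)) a := by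
      rw [← mul_apply, ← zpow_one_add, add_sub_cancel]
    exact ih.trans (hτ ▸ h _).symm

def sumCross (f g : Perm α) : Perm (α ⊕ α) :=
  (sumCongr f g).trans (sumComm α α)

@[simp]
theorem sumCross_inl (f g : Perm α) (i : α) : sumCross f g (inl i) = inr (f i) := rfl

@[simp]
theorem sumCross_inr (f g : Perm α) (j : α) : sumCross f g (inr j) = inl (g j) := rfl

theorem exists_eq_sumCross [Finite α] {τ : Perm (α ⊕ α)} (h : ∀ i, ∃ j, τ (inl i) = inr j) :
    ∃ f g : Perm α, τ = sumCross f g := by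
  have hmaps : Set.MapsTo (τ.trans (sumComm α α)) (Set.range inl) (Set.range inl) := by
    rintro _ ⟨i, rfl⟩
    obtain ⟨j, hj⟩ := h i
    exact ⟨j, by simp [hj]⟩
  obtain ⟨⟨f, g⟩, hfg⟩ := mem_sumCongrHom_range_of_perm_mapsTo_inl hmaps
  refine ⟨f, g, ?_⟩
  ext a
  have := congrArg (fun e : Perm (α ⊕ α) => sumComm α α (e a)) hfg
  simpa [sumCross] using this.symm

theorem forall_sameCycle_sumCross (f g : Perm α) (h : ∀ i j, (g * f).SameCycle i j) :
    ∀ a b, (sumCross f g).SameCycle a b := by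
  have hinl : ∀ i j, (sumCross f g).SameCycle (inl i) (inl j) :=
    fun i j => (h i j).map_of_forall_sameCycle_apply inl fun _ => ⟨2, by simp [sq]⟩
  have hinr : ∀ i, (sumCross f g).SameCycle (inl i) (inr (f i)) := fun i => ⟨1, by simp⟩
  have hall : ∀ a i, (sumCross f g).SameCycle a (inl i) := by
    rintro (j | j) i
    · exact hinl j i
    · simpa using ((hinl (f⁻¹ j) i).symm.trans (hinr (f⁻¹ j))).symm
  rintro a (i | j)
  · exact hall a i
  · simpa using (hall a (f⁻¹ j)).trans (hinr (f⁻¹ j))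

theorem apply_ne_or_apply_ne_of_forall_sameCycle_sumCross [Nontrivial α] {f g : Perm α}
    (h : ∀ a b, (sumCross f g).SameCycle a b) (i : α) : f i ≠ i ∨ g i ≠ i := by
  by_contra! hfix
  obtain ⟨j, hji⟩ := exists_ne i
  obtain ⟨k, hk⟩ := h (inl i) (inl j)
  have hswap : sumCross f g (sumCross f g (inl i)) = inl i := by simp [hfix.1, hfix.2]
  rcases zpow_apply_eq_of_apply_apply_eq_self hswap k with h' | h' <;> simp [hk, hji] at h'

theorem forall_sameCycle_mul_inv_of_sumCross {f g : Perm α} (hfg : Disjoint f g)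
    (h : ∀ a b, (sumCross f g).SameCycle a b) : ∀ i j, (g * f⁻¹).SameCycle i j := by
  have hg : ∀ j, (g * f⁻¹).SameCycle j (g j) := by
    intro j
    rcases hfg j with hf | hg
    · exact ⟨1, by rw [zpow_one, mul_apply, inv_eq_iff_eq.mpr hf.symm]⟩
    · rw [hg]
  have hf : ∀ i, (g * f⁻¹).SameCycle i (f i) := by
    intro i
    have hstep : (g * f⁻¹).SameCycle (f i) (g i) := ⟨1, by simp⟩
    exact (hg i).trans hstep.symm
  have hstep : ∀ a, (g * f⁻¹).SameCycle (Sum.elim id id a) (Sum.elim id id (sumCross f g a)) := by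
    rintro (i | j)
    · exact hf i
    · exact hg j
  intro i j
  exact (h (inl i) (inl j)).map_of_forall_sameCycle_apply (Sum.elim id id) hstep

end Equiv.Perm

theorem sameCycle_finRotate {n : ℕ} (hn : 2 ≤ n) (i j : Fin n) : (finRotate n).SameCycle i j := by
  have hmoved : ∀ k, finRotate n k ≠ k := fun k => by
    rw [← mem_support, support_finRotate_of_le hn]
    exact mem_univ k
  exact (isCycle_finRotate_of_le hn).sameCycle (hmoved i) (hmoved j)

section Cost

variable {n : ℕ} (c : Fin n → Fin n → ℝ) (M : ℝ)

/-- The paper's `c̄` (the cost `c` with diagonal `−M`) shifted by `+M`. -/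
def shiftedCost (i j : Fin n) : ℝ := if i = j then 0 else c i j + M

variable {c M}

theorem shiftedCost_nonneg (hc : ∀ i j, 0 ≤ c i j) (hM : 0 ≤ M) (i j : Fin n) :
    0 ≤ shiftedCost c M i j := by
  unfold shiftedCost
  split_ifs
  · exact le_rfl
  · linarith [hc i j]

theorem le_shiftedCost (hc : ∀ i j, 0 ≤ c i j) {i j : Fin n} (hij : i ≠ j) :
    M ≤ shiftedCost c M i j := by
  simp [shiftedCost, hij, hc i j]

variable (c M)

theorem jvCost_inl_inr (i j : Fin n) : jvCost n c M (inl i) (inr j) = shiftedCost c M j i := by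
  simp only [jvCost, shiftedCost, eq_comm]

theorem jvCost_inr_inl (i j : Fin n) : jvCost n c M (inr j) (inl i) = shiftedCost c M j i := by
  simp only [jvCost, shiftedCost, eq_comm]

theorem sum_jvCost_sumCross (f g : Perm (Fin n)) :
    ∑ a, jvCost n c M a (sumCross f g a) =
      ∑ j, (shiftedCost c M j (f⁻¹ j) + shiftedCost c M j (g j)) := by
  rw [Fintype.sum_sum_type, sum_add_distrib,
    ← Equiv.sum_comp f (fun j => shiftedCost c M j (f⁻¹ j))]
  simp [jvCost_inl_inr, jvCost_inr_inl]

theorem shiftedCost_inv_add_shiftedCost {f g : Perm (Fin n)} (hfg : Disjoint f g) {j : Fin n}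
    (hj : f j ≠ j ∨ g j ≠ j) :
    shiftedCost c M j (f⁻¹ j) + shiftedCost c M j (g j) = c j ((g * f⁻¹) j) + M := by
  rcases hfg j with hf | hg
  · have hf' : f⁻¹ j = j := inv_eq_iff_eq.mpr hf.symm
    have hg : j ≠ g j := (hj.resolve_left (not_not_intro hf)).symm
    rw [mul_apply, hf']
    simp [shiftedCost, hg]
  · have hf' : j ≠ f⁻¹ j := fun h =>
      hj.resolve_right (not_not_intro hg) (inv_eq_iff_eq.mp h.symm).symm
    have hgf : g (f⁻¹ j) = f⁻¹ j :=
      (hfg (f⁻¹ j)).resolve_left fun h => hf' ((f.apply_symm_apply j).symm.trans h)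
    rw [mul_apply, hgf]
    simp only [shiftedCost, hg, if_neg hf', ↓reduceIte, add_zero]

theorem sum_jvCost_sumCross_of_disjoint {f g : Perm (Fin n)} (hfg : Disjoint f g)
    (hmove : ∀ j, f j ≠ j ∨ g j ≠ j) :
    ∑ a, jvCost n c M a (sumCross f g a) = ∑ j, c j ((g * f⁻¹) j) + n * M := by
  rw [sum_jvCost_sumCross,
    sum_congr rfl fun j _ => shiftedCost_inv_add_shiftedCost c M hfg (hmove j), sum_add_distrib]
  simp

variable {c M} in
theorem add_one_mul_le_sum_jvCost_sumCross (hc : ∀ i j, 0 ≤ c i j) (hM : 0 ≤ M)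
    {f g : Perm (Fin n)} (hfg : ¬Disjoint f g) (hmove : ∀ j, f j ≠ j ∨ g j ≠ j) :
    (n + 1) * M ≤ ∑ a, jvCost n c M a (sumCross f g a) := by
  set A : Fin n → ℝ := fun j => shiftedCost c M j (f⁻¹ j) + shiftedCost c M j (g j)
  have hfg' : ∀ j, f j ≠ j → j ≠ f⁻¹ j := fun j hj h => hj (inv_eq_iff_eq.mp h.symm).symm
  have hA : ∀ j, M ≤ A j := fun j => by
    rcases hmove j with hf | hg
    · linarith [le_shiftedCost (M := M) hc (hfg' j hf), shiftedCost_nonneg hc hM j (g j)]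
    · linarith [le_shiftedCost (M := M) hc (Ne.symm hg), shiftedCost_nonneg hc hM j (f⁻¹ j)]
  obtain ⟨j₀, hf₀, hg₀⟩ : ∃ j, f j ≠ j ∧ g j ≠ j := by simpa [Perm.Disjoint] using hfg
  have hA₀ : 2 * M ≤ A j₀ := by
    linarith [le_shiftedCost (M := M) hc (hfg' j₀ hf₀), le_shiftedCost (M := M) hc (Ne.symm hg₀)]
  have hexcess : A j₀ - M ≤ ∑ j, (A j - M) :=
    single_le_sum (fun j _ => sub_nonneg.mpr (hA j)) (mem_univ j₀)
  rw [sum_jvCost_sumCross]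
  simp only [sum_sub_distrib, sum_const, card_univ, Fintype.card_fin, nsmul_eq_mul] at hexcess
  linarith

end Cost

theorem sum_apply_le_sum_sum {ι : Type*} [Fintype ι] {c : ι → ι → ℝ} (hc : ∀ i j, 0 ≤ c i j)
    (σ : ι → ι) : ∑ i, c i (σ i) ≤ ∑ i, ∑ j, c i j :=
  sum_le_sum fun i _ => single_le_sum (fun j _ => hc i j) (mem_univ (σ i))

theorem exists_jvTour_of_tour {n : ℕ} (hn : 2 ≤ n) (c : Fin n → Fin n → ℝ) (M : ℝ)
    {σ : Perm (Fin n)} (hσ : ∀ i j, σ.SameCycle i j) :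
    ∃ τ : Perm (Fin n ⊕ Fin n), (∀ a b, τ.SameCycle a b) ∧ (∀ a, jvAllowed n a (τ a)) ∧
      ∑ a, jvCost n c M a (τ a) = ∑ i, c i (σ i) + n * M := by
  have : Nontrivial (Fin n) := Fin.nontrivial_iff_two_le.mpr hn
  have hτ := forall_sameCycle_sumCross 1 σ (by simpa using hσ)
  refine ⟨sumCross 1 σ, hτ, by rintro (i | i) <;> trivial, ?_⟩
  rw [sum_jvCost_sumCross_of_disjoint c M (disjoint_one_left σ)
    (apply_ne_or_apply_ne_of_forall_sameCycle_sumCross hτ)]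
  simp

theorem exists_tour_of_jvTour {n : ℕ} (hn : 2 ≤ n) {c : Fin n → Fin n → ℝ}
    (hc : ∀ i j, 0 ≤ c i j) {M : ℝ} (hM : ∑ i, ∑ j, c i j < M)
    {τ : Perm (Fin n ⊕ Fin n)} (hτ : ∀ a b, τ.SameCycle a b) (hall : ∀ a, jvAllowed n a (τ a)) :
    ∃ σ : Perm (Fin n), (∀ i j, σ.SameCycle i j) ∧
      ∑ i, c i (σ i) + n * M ≤ ∑ a, jvCost n c M a (τ a) := by
  have : Nontrivial (Fin n) := Fin.nontrivial_iff_two_le.mpr hn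
  obtain ⟨f, g, rfl⟩ : ∃ f g, τ = sumCross f g := exists_eq_sumCross fun i => by
    rcases hi : τ (inl i) with j | j
    · simpa [hi, jvAllowed] using hall (inl i)
    · exact ⟨j, rfl⟩
  have hmove := apply_ne_or_apply_ne_of_forall_sameCycle_sumCross hτ
  by_cases hfg : Disjoint f g
  · exact ⟨g * f⁻¹, forall_sameCycle_mul_inv_of_sumCross hfg hτ,
      (sum_jvCost_sumCross_of_disjoint c M hfg hmove).ge⟩
  · refine ⟨finRotate n, sameCycle_finRotate hn, ?_⟩
    have hM₀ : 0 ≤ M := (sum_nonneg fun i _ => sum_nonneg fun j _ => hc i j).trans hM.le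
    linarith [sum_apply_le_sum_sum hc (finRotate n),
      add_one_mul_le_sum_jvCost_sumCross hc hM₀ hfg hmove]

theorem Real.sInf_eq_sInf_add_of_forall_exists_le {s t : Set ℝ} {r : ℝ} (hs : s.Nonempty)
    (hs' : BddBelow s) (hst : ∀ x ∈ s, x + r ∈ t) (hts : ∀ y ∈ t, ∃ x ∈ s, x + r ≤ y) :
    sInf t = sInf s + r := by
  obtain ⟨b, hb⟩ := hs'
  have ht' : BddBelow t := ⟨b + r, fun y hy => by
    obtain ⟨x, hx, hxy⟩ := hts y hy
    linarith [hb hx]⟩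
  refine le_antisymm ?_ ?_
  · have : sInf t - r ≤ sInf s := le_csInf hs fun x hx => by
      linarith [csInf_le ht' (hst x hx)]
    linarith
  · refine le_csInf (hs.image (· + r) |>.mono ?_) fun y hy => ?_
    · rintro _ ⟨x, hx, rfl⟩
      exact hst x hx
    · obtain ⟨x, hx, hxy⟩ := hts y hy
      linarith [csInf_le ⟨b, hb⟩ hx]

/-- Jonker–Volgenant: with `M` a sufficiently large positive number, the
optimal ATSP value and the optimal value of the transformed symmetric instance
satisfy `ATSP(c) = STSP(c̃) − nM`. -/
theorem jonker_volgenant (n : ℕ) (hn : 2 ≤ n) (c : Fin n → Fin n → ℝ)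
    (hc : ∀ i j, 0 ≤ c i j) (M : ℝ) (hM : ∑ i, ∑ j, c i j < M) :
    ATSPval n c = STSPval n c M - n * M := by
  rw [eq_sub_iff_add_eq, eq_comm]
  refine Real.sInf_eq_sInf_add_of_forall_exists_le ⟨_, finRotate n, sameCycle_finRotate hn, rfl⟩
    ⟨0, ?_⟩ ?_ ?_
  · rintro _ ⟨σ, -, rfl⟩
    exact sum_nonneg fun i _ => hc i (σ i)
  · rintro _ ⟨σ, hσ, rfl⟩
    obtain ⟨τ, hτ, hall, hcost⟩ := exists_jvTour_of_tour hn c M hσ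
    exact ⟨τ, hτ, hall, hcost.symm⟩
  · rintro _ ⟨τ, hτ, hall, rfl⟩
    obtain ⟨σ, hσ, hcost⟩ := exists_tour_of_jvTour hn hc hM hτ hall
    exact ⟨_, ⟨σ, hσ, rfl⟩, hcost⟩
end
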